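/- If every doctor has interview capacity at least min{|D|,|H|} and every hospital has interview capacity at least min{|D|,|H|}, then the arrangement (ι,κ) is globally adequate: for every strict preference profile, the (ι,κ)-matching is stable. -/
import Mathlib


/- Formal model of the two-step interview-then-match process of
Echenique-et-al-style markets: Step 1 computes the interview matching by
hospital-proposing deferred acceptance (with responsive, capacity-constrained
choice functions); Step 2 computes the final one-to-one matching by
doctor-proposing deferred acceptance on preferences restricted to interview
partners. -/

open Finset

section Model

variable {D H : Type*} [Fintype D] [Fintype H] [DecidableEq D] [DecidableEq H]

/-- The (at most) `n` best elements of `s` according to `rank` (lower rank = better). -/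
def topN {α : Type*} [DecidableEq α] (rank : α → ℕ) (n : ℕ) (s : Finset α) : Finset α :=
  s.filter fun x => (s.filter fun y => rank y < rank x).card < n

/-- A market: strict preferences represented by rank functions
(lower rank = more preferred) together with acceptability predicates. -/
structure Market (D H : Type*) where
  rankDH : D → H → ℕ
  accD : D → H → Bool
  rankHD : H → D → ℕ
  accH : H → D → Bool

/-- Strict preferences: rank functions are injective. -/
def Market.Strict (M : Market D H) : Prop :=
  (∀ d, Function.Injective (M.rankDH d)) ∧ (∀ h, Function.Injective (M.rankHD h))

/-- Hospital `h` proposes to its `ι h` best acceptable doctors that have not rejected it. -/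
def hProps (M : Market D H) (ι : H → ℕ) (R : Finset (H × D)) (h : H) : Finset D :=
  topN (M.rankHD h) (ι h) (univ.filter fun d => M.accH h d ∧ (h, d) ∉ R)

/-- Doctor `d` keeps her `κ d` best acceptable proposals. -/
def dKeeps (M : Market D H) (ι : H → ℕ) (κ : D → ℕ) (R : Finset (H × D)) (d : D) :
    Finset H :=
  topN (fun h => M.rankDH d h) (κ d) (univ.filter fun h => M.accD d h ∧ d ∈ hProps M ι R h)

/-- One round of hospital-proposing deferred acceptance: the (cumulative) rejection set
grows by the proposals not kept. -/
def iStep (M : Market D H) (ι : H → ℕ) (κ : D → ℕ) (R : Finset (H × D)) :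
    Finset (H × D) :=
  R ∪ univ.filter fun p : H × D => p.2 ∈ hProps M ι R p.1 ∧ p.1 ∉ dKeeps M ι κ R p.2

/-- Rejection set at the end of hospital-proposing DA (interview step). -/
def iRej (M : Market D H) (ι : H → ℕ) (κ : D → ℕ) : Finset (H × D) :=
  (iStep M ι κ)^[Fintype.card D * Fintype.card H] ∅

/-- The interview matching (the hospital-optimal stable many-to-many matching) computed
by hospital-proposing deferred acceptance: pairs `(h, d)` such that `h` interviews `d`. -/
def interviews (M : Market D H) (ι : H → ℕ) (κ : D → ℕ) : Finset (H × D) :=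
  univ.filter fun p : H × D =>
    p.2 ∈ hProps M ι (iRej M ι κ) p.1 ∧ p.1 ∈ dKeeps M ι κ (iRej M ι κ) p.2

/-- Doctor `d` proposes to her best interview partner that has not rejected her. -/
def dProps (M : Market D H) (V : Finset (H × D)) (S : Finset (D × H)) (d : D) :
    Finset H :=
  topN (M.rankDH d) 1 (univ.filter fun h => (h, d) ∈ V ∧ (d, h) ∉ S)

/-- Hospital `h` keeps its best proposal. -/
def hKeeps (M : Market D H) (V : Finset (H × D)) (S : Finset (D × H)) (h : H) :
    Finset D :=
  topN (M.rankHD h) 1 (univ.filter fun d => h ∈ dProps M V S d)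

/-- One round of doctor-proposing DA on preferences restricted to the interview matching `V`. -/
def mStep (M : Market D H) (V : Finset (H × D)) (S : Finset (D × H)) : Finset (D × H) :=
  S ∪ univ.filter fun p : D × H => p.2 ∈ dProps M V S p.1 ∧ p.1 ∉ hKeeps M V S p.2

/-- Rejection set at the end of the doctor-proposing DA of the matching step. -/
def mRej (M : Market D H) (V : Finset (H × D)) : Finset (D × H) :=
  (mStep M V)^[Fintype.card D * Fintype.card H] ∅

/-- The final matching: doctor-proposing DA on preferences restricted to interviews `V`. -/
def finalMatch (M : Market D H) (V : Finset (H × D)) : Finset (D × H) :=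
  univ.filter fun p : D × H =>
    p.2 ∈ dProps M V (mRej M V) p.1 ∧ p.1 ∈ hKeeps M V (mRej M V) p.2

/-- The `(ι,κ)`-matching: the culmination of the two-step process. -/
def ikMatching (M : Market D H) (ι : H → ℕ) (κ : D → ℕ) : Finset (D × H) :=
  finalMatch M (interviews M ι κ)

/-- `(d, h)` is a blocking pair of `μ` (w.r.t. the true, unrestricted preferences). -/
def Blocks (M : Market D H) (μ : Finset (D × H)) (d : D) (h : H) : Prop :=
  M.accD d h ∧ M.accH h d ∧ (d, h) ∉ μ ∧
    (∀ h', (d, h') ∈ μ → M.rankDH d h < M.rankDH d h') ∧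
    (∀ d', (d', h) ∈ μ → M.rankHD h d < M.rankHD h d')

instance (M : Market D H) (μ : Finset (D × H)) (d : D) (h : H) :
    Decidable (Blocks M μ d h) := by
  unfold Blocks; infer_instance

/-- A matching is stable if it admits no blocking pair. -/
def Stable (M : Market D H) (μ : Finset (D × H)) : Prop := ∀ d h, ¬ Blocks M μ d h

/-- `(ι,κ)` is adequate at `M` if the `(ι,κ)`-matching is stable. -/
def Adequate (M : Market D H) (ι : H → ℕ) (κ : D → ℕ) : Prop :=
  Stable M (ikMatching M ι κ)

/-- One-to-one matching (as a set of pairs). -/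
def IsMatching (μ : Finset (D × H)) : Prop :=
  (∀ d h h', (d, h) ∈ μ → (d, h') ∈ μ → h = h') ∧
    (∀ d d' h, (d, h) ∈ μ → (d', h) ∈ μ → d = d')

/-- Common preferences: all doctors rank the hospitals identically, all hospitals rank
the doctors identically, everyone is mutually acceptable (and preferences are strict). -/
def CommonPrefs (M : Market D H) : Prop :=
  M.Strict ∧ (∀ d d', M.rankDH d = M.rankDH d') ∧ (∀ h h', M.rankHD h = M.rankHD h') ∧
    ∀ d h, M.accD d h ∧ M.accH h d

/-- Number of hospitals matched under `μ`. -/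
def matchedHospitals (μ : Finset (D × H)) : ℕ :=
  (univ.filter fun h : H => ∃ d, (d, h) ∈ μ).card

/-- Number of blocking pairs of `μ`. -/
def blockingCount (M : Market D H) (μ : Finset (D × H)) : ℕ :=
  (univ.filter fun p : D × H => Blocks M μ p.1 p.2).card

end Model

/-- `(ι,κ)` is globally adequate: adequate at every (strict) preference profile. -/
def GloballyAdequate (D H : Type*) [Fintype D] [Fintype H] [DecidableEq D] [DecidableEq H]
    (ι : H → ℕ) (κ : D → ℕ) : Prop :=
  ∀ M : Market D H, M.Strict → Adequate M ι κ

variable {D H : Type*} [Fintype D] [Fintype H] [DecidableEq D] [DecidableEq H]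

section AuxTopN

open Finset

variable {α : Type*} [DecidableEq α]

lemma mem_topN_iff {r : α → ℕ} {n : ℕ} {s : Finset α} {x : α} :
    x ∈ topN r n s ↔ x ∈ s ∧ (s.filter fun y => r y < r x).card < n := by
  simp [topN]

lemma topN_subset {r : α → ℕ} {n : ℕ} {s : Finset α} : topN r n s ⊆ s :=
  filter_subset _ _

lemma topN_eq_self {r : α → ℕ} {n : ℕ} {s : Finset α} (h : s.card ≤ n) :
    topN r n s = s := by
  apply Finset.Subset.antisymm topN_subset
  intro x hx
  rw [mem_topN_iff]
  refine ⟨hx, ?_⟩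
  calc (s.filter fun y => r y < r x).card ≤ (s.erase x).card := by
        apply card_le_card; intro y hy; rw [mem_filter] at hy
        exact mem_erase.2 ⟨fun e => by subst e; exact lt_irrefl _ hy.2, hy.1⟩
    _ = s.card - 1 := card_erase_of_mem hx
    _ < s.card := Nat.sub_lt (card_pos.2 ⟨x, hx⟩) one_pos
    _ ≤ n := h

lemma topN_anti {r : α → ℕ} {n : ℕ} {s' s : Finset α} (hs : s' ⊆ s) {x : α}
    (hx : x ∈ s') (h : x ∈ topN r n s) : x ∈ topN r n s' := by
  rw [mem_topN_iff] at h ⊢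
  exact ⟨hx, lt_of_le_of_lt (card_le_card (filter_subset_filter _ hs)) h.2⟩

lemma topN_all_lt {r : α → ℕ} {n : ℕ} {s : Finset α} {x : α} (hx : x ∈ s)
    (hc : n ≤ (s.filter fun y => r y < r x).card) {z : α} (hz : z ∈ topN r n s) :
    r z < r x := by
  by_contra hzx
  push_neg at hzx
  rw [mem_topN_iff] at hz
  have hsub : (s.filter fun y => r y < r x) ⊆ s.filter fun y => r y < r z := by
    intro y hy; rw [mem_filter] at hy ⊢
    exact ⟨hy.1, lt_of_lt_of_le hy.2 hzx⟩
  have := card_le_card hsub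
  omega

lemma exists_min_topN {r : α → ℕ} {n : ℕ} {s : Finset α} (hs : s.Nonempty) (hn : 1 ≤ n) :
    ∃ m, m ∈ topN r n s ∧ ∀ y ∈ s, r m ≤ r y := by
  obtain ⟨m, hm, hmin⟩ := s.exists_min_image r hs
  refine ⟨m, ?_, hmin⟩
  rw [mem_topN_iff]
  refine ⟨hm, lt_of_lt_of_le ?_ hn⟩
  have : (s.filter fun y => r y < r m) = ∅ := by
    apply filter_eq_empty_iff.2
    intro y hy
    exact not_lt.2 (hmin y hy)
  rw [this]; simp

lemma topN_one_eq {r : α → ℕ} (hr : Function.Injective r) {s : Finset α} {x y : α}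
    (hx : x ∈ topN r 1 s) (hy : y ∈ topN r 1 s) : x = y := by
  rw [mem_topN_iff] at hx hy
  by_contra hne
  rcases (hr.ne hne).lt_or_gt with h | h
  · have hmem : x ∈ s.filter fun z => r z < r y := mem_filter.2 ⟨hx.1, h⟩
    have := card_pos.2 ⟨x, hmem⟩; omega
  · have hmem : y ∈ s.filter fun z => r z < r x := mem_filter.2 ⟨hy.1, h⟩
    have := card_pos.2 ⟨y, hmem⟩; omega

lemma card_topN {r : α → ℕ} (hr : Function.Injective r) (n : ℕ) (s : Finset α) :
    (topN r n s).card = min n s.card := by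
  set c : α → ℕ := fun x => (s.filter fun y => r y < r x).card with hc
  have hmono : ∀ x ∈ s, ∀ y ∈ s, r x < r y → c x < c y := by
    intro x hx y hy hxy
    apply card_lt_card
    constructor
    · intro z hz; rw [mem_filter] at hz ⊢; exact ⟨hz.1, lt_trans hz.2 hxy⟩
    · intro hcon
      have : x ∈ s.filter fun z => r z < r y := mem_filter.2 ⟨hx, hxy⟩
      have := hcon this
      rw [mem_filter] at this
      exact lt_irrefl _ this.2
  have hinj : Set.InjOn c s := by
    intro x hx y hy hxy
    by_contra hne
    rcases (hr.ne hne).lt_or_gt with h | h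
    · exact absurd hxy (Nat.ne_of_lt (hmono x hx y hy h))
    · exact absurd hxy (Nat.ne_of_gt (hmono y hy x hx h))
  have himg : s.image c = range s.card := by
    apply eq_of_subset_of_card_le
    · intro v hv; rw [mem_image] at hv; obtain ⟨x, hx, rfl⟩ := hv
      rw [mem_range]
      calc c x ≤ (s.erase x).card := by
            apply card_le_card; intro y hy; rw [mem_filter] at hy
            exact mem_erase.2 ⟨fun e => by subst e; exact lt_irrefl _ hy.2, hy.1⟩
        _ = s.card - 1 := card_erase_of_mem hx
        _ < s.card := Nat.sub_lt (card_pos.2 ⟨x, hx⟩) one_pos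
    · rw [card_range, card_image_of_injOn hinj]
  have h1 : topN r n s = s.filter fun x => c x < n := rfl
  rw [h1, ← card_image_of_injOn (hinj.mono (coe_subset.2 (filter_subset _ s)))]
  have h2 : (s.filter fun x => c x < n).image c = (s.image c).filter (fun v => v < n) :=
    (filter_image (p := fun v : ℕ => v < n) (f := c) (s := s)).symm
  rw [h2, himg]
  have h3 : (range s.card).filter (fun v => v < n) = range (min s.card n) := by
    ext v; simp [lt_min_iff, and_comm]
  rw [h3, card_range, Nat.min_comm]

end AuxTopN

section AuxIter

open Finset

variable {β : Type*} [DecidableEq β] [Fintype β]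

lemma iter_stab (f : Finset β → Finset β) {k : ℕ} (hk : f (f^[k] ∅) = f^[k] ∅) :
    ∀ m, k ≤ m → f^[m] (∅ : Finset β) = f^[k] ∅ := by
  intro m hm
  induction m with
  | zero => rw [Nat.le_zero.mp hm]
  | succ m ih =>
    rcases Nat.lt_or_ge k (m+1) with h | h
    · have h2 := ih (by omega)
      rw [Function.iterate_succ_apply', h2, hk]
    · have : k = m + 1 := le_antisymm hm h
      rw [this]

lemma iter_card (f : Finset β → Finset β) (hf : ∀ s, s ⊆ f s) :
    ∀ n : ℕ, (∀ j < n, f^[j+1] (∅ : Finset β) ≠ f^[j] ∅) → n ≤ (f^[n] (∅ : Finset β)).card := by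
  intro n
  induction n with
  | zero => simp
  | succ n ih =>
    intro hj
    have h1 : n ≤ (f^[n] (∅ : Finset β)).card := ih (fun j hjn => hj j (by omega))
    have h2 : f^[n] (∅ : Finset β) ⊂ f^[n+1] ∅ := by
      rw [Function.iterate_succ_apply']
      exact Finset.ssubset_iff_subset_ne.2 ⟨hf _, fun e => hj n (by omega) (by rw [Function.iterate_succ_apply']; exact e.symm)⟩
    have := card_lt_card h2
    omega

lemma iter_fixed (f : Finset β → Finset β) (hf : ∀ s, s ⊆ f s) {n : ℕ}
    (hn : Fintype.card β ≤ n) : f (f^[n] ∅) = f^[n] ∅ := by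
  by_cases hex : ∃ j, j < n ∧ f^[j+1] (∅ : Finset β) = f^[j] ∅
  · obtain ⟨j, hjn, hj⟩ := hex
    have hfix : f (f^[j] (∅ : Finset β)) = f^[j] ∅ :=
      (Function.iterate_succ_apply' f j ∅).symm.trans hj
    have h2 := iter_stab f hfix n (le_of_lt hjn)
    rw [h2, hfix]
  · push_neg at hex
    have hcard := iter_card f hf n (fun j hj => hex j hj)
    have huniv : f^[n] (∅ : Finset β) = univ := by
      apply Finset.eq_univ_of_card
      have h1 : (f^[n] (∅ : Finset β)).card ≤ Fintype.card β := by
        rw [← card_univ]; exact card_le_univ _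
      omega
    rw [huniv]
    exact Finset.Subset.antisymm (subset_univ _) (hf univ)

lemma iter_entry (f : Finset β → Finset β) {x : β} (n : ℕ) (hx : x ∈ f^[n] (∅ : Finset β)) :
    ∃ k, k < n ∧ x ∉ f^[k] (∅ : Finset β) ∧ x ∈ f (f^[k] ∅) := by
  induction n with
  | zero => simp at hx
  | succ n ih =>
    by_cases hxn : x ∈ f^[n] (∅ : Finset β)
    · obtain ⟨k, h1, h2, h3⟩ := ih hxn; exact ⟨k, by omega, h2, h3⟩
    · exact ⟨n, by omega, hxn, by rwa [Function.iterate_succ_apply'] at hx⟩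

lemma iter_invar (f : Finset β → Finset β) (P : Finset β → Prop)
    (hP : ∀ s, P s → P (f s)) {k n : ℕ} (hk : k ≤ n) (h : P (f^[k] (∅ : Finset β))) :
    P (f^[n] (∅ : Finset β)) := by
  obtain ⟨j, rfl⟩ := Nat.exists_eq_add_of_le hk
  clear hk
  induction j with
  | zero => simpa using h
  | succ j ih =>
    have he : k + (j+1) = (k+j) + 1 := rfl
    rw [he, Function.iterate_succ_apply']
    exact hP _ ih

end AuxIter

section AuxMarket

open Finset

variable {D H : Type*} [Fintype D] [Fintype H] [DecidableEq D] [DecidableEq H]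

lemma mRej_fixed (M : Market D H) (V : Finset (H × D)) :
    mStep M V (mRej M V) = mRej M V := by
  unfold mRej
  exact iter_fixed _ (fun s => subset_union_left)
    (le_of_eq (Fintype.card_prod D H))

lemma dProps_mem_keeps (M : Market D H) {V : Finset (H × D)} {d : D} {h : H}
    (hp : h ∈ dProps M V (mRej M V) d) : d ∈ hKeeps M V (mRej M V) h := by
  by_contra hk
  have h1 : (d, h) ∈ mStep M V (mRej M V) :=
    mem_union_right _ (mem_filter.2 ⟨mem_univ _, hp, hk⟩)
  rw [mRej_fixed] at h1
  have h2 := mem_filter.1 (topN_subset hp)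
  exact h2.2.2 h1

lemma mem_finalMatch (M : Market D H) {V : Finset (H × D)} {d : D} {h : H} :
    (d, h) ∈ finalMatch M V ↔ h ∈ dProps M V (mRej M V) d := by
  unfold finalMatch
  simp only [mem_filter, mem_univ, true_and]
  exact ⟨fun h' => h'.1, fun hp => ⟨hp, dProps_mem_keeps M hp⟩⟩

lemma finalMatch_right_unique (M : Market D H) (hM : M.Strict) {V : Finset (H × D)}
    {d : D} {h1 h2 : H} (hm1 : (d, h1) ∈ finalMatch M V) (hm2 : (d, h2) ∈ finalMatch M V) :
    h1 = h2 :=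
  topN_one_eq (hM.1 d) ((mem_finalMatch M).1 hm1) ((mem_finalMatch M).1 hm2)

lemma finalMatch_left_unique (M : Market D H) (hM : M.Strict) {V : Finset (H × D)}
    {d1 d2 : D} {h : H} (hm1 : (d1, h) ∈ finalMatch M V) (hm2 : (d2, h) ∈ finalMatch M V) :
    d1 = d2 := by
  have h1 := (mem_filter.1 hm1).2.2
  have h2 := (mem_filter.1 hm2).2.2
  exact topN_one_eq (hM.2 h) h1 h2

lemma rejected_improved (M : Market D H) (hM : M.Strict) {V : Finset (H × D)} {d : D} {h : H}
    (hS : (d, h) ∈ mRej M V) :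
    ∃ d'', (d'', h) ∈ finalMatch M V ∧ M.rankHD h d'' < M.rankHD h d := by
  obtain ⟨k, hkN, hnot, hin⟩ := iter_entry (mStep M V) (Fintype.card D * Fintype.card H) hS
  have hdata : h ∈ dProps M V ((mStep M V)^[k] ∅) d ∧ d ∉ hKeeps M V ((mStep M V)^[k] ∅) h := by
    rcases mem_union.1 hin with h1 | h1
    · exact absurd h1 hnot
    · exact (mem_filter.1 h1).2
  have hPk : ∃ d'', d'' ∈ hKeeps M V ((mStep M V)^[k] ∅) h ∧
      M.rankHD h d'' < M.rankHD h d := by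
    have hdt : d ∈ univ.filter fun d' => h ∈ dProps M V ((mStep M V)^[k] ∅) d' :=
      mem_filter.2 ⟨mem_univ _, hdata.1⟩
    have hnk : ¬ (((univ.filter fun d' => h ∈ dProps M V ((mStep M V)^[k] ∅) d').filter
        fun y => M.rankHD h y < M.rankHD h d).card < 1) := by
      intro hc; exact hdata.2 (mem_topN_iff.2 ⟨hdt, hc⟩)
    have hb : 1 ≤ ((univ.filter fun d' => h ∈ dProps M V ((mStep M V)^[k] ∅) d').filter
        fun y => M.rankHD h y < M.rankHD h d).card := by omega
    obtain ⟨d0, hd0⟩ := card_pos.1 hb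
    rw [mem_filter] at hd0
    obtain ⟨m, hmk, hmin⟩ := exists_min_topN (r := M.rankHD h) ⟨d, hdt⟩ (le_refl 1)
    exact ⟨m, hmk, lt_of_le_of_lt (hmin d0 hd0.1) hd0.2⟩
  have hstep : ∀ S, (∃ d'', d'' ∈ hKeeps M V S h ∧ M.rankHD h d'' < M.rankHD h d) →
      (∃ d'', d'' ∈ hKeeps M V (mStep M V S) h ∧ M.rankHD h d'' < M.rankHD h d) := by
    rintro S ⟨d'', hk2, hlt⟩
    have hfil := mem_filter.1 (topN_subset hk2)
    have hdp : h ∈ dProps M V S d'' := hfil.2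
    have hsub := mem_filter.1 (topN_subset hdp)
    have hnotS' : (d'', h) ∉ mStep M V S := by
      intro hmem
      rcases mem_union.1 hmem with h1 | h1
      · exact hsub.2.2 h1
      · exact (mem_filter.1 h1).2.2 hk2
    have hdp' : h ∈ dProps M V (mStep M V S) d'' := by
      refine topN_anti ?_ ?_ hdp
      · intro x hx; rw [mem_filter] at hx ⊢
        exact ⟨hx.1, hx.2.1, fun hc => hx.2.2 (subset_union_left hc)⟩
      · exact mem_filter.2 ⟨mem_univ _, hsub.2.1, hnotS'⟩
    have hdt' : d'' ∈ univ.filter fun d0 => h ∈ dProps M V (mStep M V S) d0 :=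
      mem_filter.2 ⟨mem_univ _, hdp'⟩
    obtain ⟨m, hmk, hmin⟩ := exists_min_topN (r := M.rankHD h) ⟨d'', hdt'⟩ (le_refl 1)
    exact ⟨m, hmk, lt_of_le_of_lt (hmin d'' hdt') hlt⟩
  have hPN : ∃ d'', d'' ∈ hKeeps M V (mRej M V) h ∧ M.rankHD h d'' < M.rankHD h d :=
    iter_invar (mStep M V)
      (fun S => ∃ d'', d'' ∈ hKeeps M V S h ∧ M.rankHD h d'' < M.rankHD h d)
      hstep (le_of_lt hkN) hPk
  obtain ⟨d'', hk2, hlt⟩ := hPN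
  have hdp : h ∈ dProps M V (mRej M V) d'' := (mem_filter.1 (topN_subset hk2)).2
  exact ⟨d'', (mem_finalMatch M).2 hdp, hlt⟩

lemma master_lemma (M : Market D H) (hM : M.Strict) {V : Finset (H × D)} {d : D} {h : H}
    (hV : (h, d) ∈ V) :
    (d, h) ∈ finalMatch M V ∨
    (∃ h'', (d, h'') ∈ finalMatch M V ∧ M.rankDH d h'' < M.rankDH d h) ∨
    (∃ d'', (d'', h) ∈ finalMatch M V ∧ M.rankHD h d'' < M.rankHD h d) := by
  by_cases hS : (d, h) ∈ mRej M V
  · exact Or.inr (Or.inr (rejected_improved M hM hS))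
  · have hhs : h ∈ univ.filter fun h0 => (h0, d) ∈ V ∧ (d, h0) ∉ mRej M V :=
      mem_filter.2 ⟨mem_univ _, hV, hS⟩
    obtain ⟨hs, hmem, hmin⟩ := exists_min_topN (r := M.rankDH d) ⟨h, hhs⟩ (le_refl 1)
    have hmu : (d, hs) ∈ finalMatch M V := (mem_finalMatch M).2 hmem
    by_cases heq : hs = h
    · subst heq; exact Or.inl hmu
    · exact Or.inr (Or.inl ⟨hs, hmu,
        lt_of_le_of_ne (hmin h hhs) (fun e => heq ((hM.1 d) e))⟩)

lemma iRej_fixed (M : Market D H) (ι : H → ℕ) (κ : D → ℕ) :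
    iStep M ι κ (iRej M ι κ) = iRej M ι κ := by
  unfold iRej
  exact iter_fixed _ (fun s => subset_union_left)
    (le_of_eq (by rw [Fintype.card_prod, Nat.mul_comm]))

lemma hProps_kept (M : Market D H) {ι : H → ℕ} {κ : D → ℕ} {d : D} {h : H}
    (hp : d ∈ hProps M ι (iRej M ι κ) h) : h ∈ dKeeps M ι κ (iRej M ι κ) d := by
  by_contra hk
  have h1 : (h, d) ∈ iStep M ι κ (iRej M ι κ) :=
    mem_union_right _ (mem_filter.2 ⟨mem_univ _, hp, hk⟩)
  rw [iRej_fixed] at h1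
  exact (mem_filter.1 (topN_subset hp)).2.2 h1

lemma mem_interviews (M : Market D H) {ι : H → ℕ} {κ : D → ℕ} {h : H} {d : D} :
    (h, d) ∈ interviews M ι κ ↔ h ∈ dKeeps M ι κ (iRej M ι κ) d := by
  unfold interviews
  simp only [mem_filter, mem_univ, true_and]
  constructor
  · exact fun x => x.2
  · intro hk
    exact ⟨(mem_filter.1 (topN_subset hk)).2.2, hk⟩

end AuxMarket

/-- If every doctor and every hospital has interview capacity at least
`min {|D|, |H|}`, then the arrangement is globally adequate. -/
theorem high_capacities_globally_adequate
    (hD : 2 ≤ Fintype.card D) (hH : 2 ≤ Fintype.card H)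
    (ι : H → ℕ) (κ : D → ℕ)
    (hι : ∀ h : H, min (Fintype.card D) (Fintype.card H) ≤ ι h)
    (hκ : ∀ d : D, min (Fintype.card D) (Fintype.card H) ≤ κ d) :
    GloballyAdequate D H ι κ := by
  intro M hM
  intro d h hB
  obtain ⟨haD, haH, hnm, hdp, hhp⟩ := hB
  have hnoV : (h, d) ∉ interviews M ι κ := by
    intro hV
    rcases master_lemma M hM hV with h1 | ⟨h'', h2, h3⟩ | ⟨d'', h2, h3⟩
    · exact hnm h1
    · have h4 := hdp h'' h2; omega
    · have h4 := hhp d'' h2; omega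
  have hnoProp : d ∉ hProps M ι (iRej M ι κ) h :=
    fun hp => hnoV ((mem_interviews M).2 (hProps_kept M hp))
  rcases le_total (Fintype.card H) (Fintype.card D) with hHD | hDH
  · -- Case A : |H| ≤ |D|
    have hι' : ∀ h0, Fintype.card H ≤ ι h0 := by
      intro h0; have := hι h0; rwa [min_eq_right hHD] at this
    have hκ' : ∀ d0, Fintype.card H ≤ κ d0 := by
      intro d0; have := hκ d0; rwa [min_eq_right hHD] at this
    have hA1 : ∀ k (h' : H) (d' : D), M.accD d' h' →
        (h', d') ∉ (iStep M ι κ)^[k] (∅ : Finset (H × D)) := by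
      intro k
      induction k with
      | zero => simp
      | succ k ih =>
        intro h' d' hacc hmem
        rw [Function.iterate_succ_apply'] at hmem
        rcases mem_union.1 hmem with h1 | h1
        · exact ih h' d' hacc h1
        · obtain ⟨-, hprop, hkeep⟩ := mem_filter.1 h1
          apply hkeep
          have hmem2 : h' ∈ univ.filter fun h0 =>
              M.accD d' h0 ∧ d' ∈ hProps M ι ((iStep M ι κ)^[k] ∅) h0 :=
            mem_filter.2 ⟨mem_univ _, hacc, hprop⟩
          have hcard : (univ.filter fun h0 =>
              M.accD d' h0 ∧ d' ∈ hProps M ι ((iStep M ι κ)^[k] ∅) h0).card ≤ κ d' :=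
            le_trans (card_filter_le _ _) (by rw [card_univ]; exact hκ' d')
          show h' ∈ topN (fun h0 => M.rankDH d' h0) (κ d') _
          rw [topN_eq_self hcard]
          exact hmem2
    have hRnd : (h, d) ∉ iRej M ι κ := hA1 _ h d haD
    have hds : d ∈ univ.filter fun d' => M.accH h d' ∧ (h, d') ∉ iRej M ι κ :=
      mem_filter.2 ⟨mem_univ _, haH, hRnd⟩
    have hnotTop : ¬ (((univ.filter fun d' => M.accH h d' ∧ (h, d') ∉ iRej M ι κ).filter
        fun y => M.rankHD h y < M.rankHD h d).card < ι h) := by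
      intro hc; exact hnoProp (mem_topN_iff.2 ⟨hds, hc⟩)
    have hbet : ι h ≤ ((univ.filter fun d' => M.accH h d' ∧ (h, d') ∉ iRej M ι κ).filter
        fun y => M.rankHD h y < M.rankHD h d).card := by omega
    have hscard : ι h + 1 ≤ (univ.filter fun d' => M.accH h d' ∧ (h, d') ∉ iRej M ι κ).card := by
      have h1 : ((univ.filter fun d' => M.accH h d' ∧ (h, d') ∉ iRej M ι κ).filter
          fun y => M.rankHD h y < M.rankHD h d) ⊆
          (univ.filter fun d' => M.accH h d' ∧ (h, d') ∉ iRej M ι κ).erase d := by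
        intro y hy; rw [mem_filter] at hy
        exact mem_erase.2 ⟨fun e => by subst e; exact lt_irrefl _ hy.2, hy.1⟩
      have h2 := card_le_card h1
      rw [card_erase_of_mem hds] at h2
      have h3 := card_pos.2 ⟨d, hds⟩
      omega
    have hWcard : Fintype.card H ≤ (hProps M ι (iRej M ι κ) h).card := by
      have h1 : (hProps M ι (iRej M ι κ) h).card =
          min (ι h) (univ.filter fun d' => M.accH h d' ∧ (h, d') ∉ iRej M ι κ).card :=
        card_topN (hM.2 h) _ _
      rw [h1, min_eq_left (by omega)]
      exact hι' h
    have hpart : ∀ d' ∈ hProps M ι (iRej M ι κ) h, ∃ h'',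
        (d', h'') ∈ finalMatch M (interviews M ι κ) ∧ h'' ≠ h := by
      intro d' hd'
      have hlt : M.rankHD h d' < M.rankHD h d := topN_all_lt hds hbet hd'
      have hV' : (h, d') ∈ interviews M ι κ := (mem_interviews M).2 (hProps_kept M hd')
      rcases master_lemma M hM hV' with h1 | ⟨h'', h2, h3⟩ | ⟨d'', h2, h3⟩
      · have h4 := hhp d' h1; omega
      · exact ⟨h'', h2, fun e => by subst e; exact lt_irrefl _ h3⟩
      · have h4 := hhp d'' h2; omega
    have hpart' : ∀ d' : D, ∃ h'', d' ∈ hProps M ι (iRej M ι κ) h →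
        ((d', h'') ∈ finalMatch M (interviews M ι κ) ∧ h'' ≠ h) := by
      intro d'
      by_cases hd' : d' ∈ hProps M ι (iRej M ι κ) h
      · obtain ⟨h'', h1, h2⟩ := hpart d' hd'; exact ⟨h'', fun _ => ⟨h1, h2⟩⟩
      · exact ⟨h, fun c => absurd c hd'⟩
    choose f hf using hpart'
    have hcle : (hProps M ι (iRej M ι κ) h).card ≤ (univ.erase h).card := by
      apply card_le_card_of_injOn f
      · intro d' hd'; exact mem_erase.2 ⟨(hf d' hd').2, mem_univ _⟩
      · intro d1 h1 d2 h2 heq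
        exact finalMatch_left_unique M hM ((hf d1 (mem_coe.1 h1)).1)
          (heq.symm ▸ (hf d2 (mem_coe.1 h2)).1)
    have hec : (univ.erase h).card = Fintype.card H - 1 := by
      rw [card_erase_of_mem (mem_univ h), card_univ]
    omega
  · -- Case B : |D| ≤ |H|
    have hι' : ∀ h0, Fintype.card D ≤ ι h0 := by
      intro h0; have := hι h0; rwa [min_eq_left hDH] at this
    have hκ' : ∀ d0, Fintype.card D ≤ κ d0 := by
      intro d0; have := hκ d0; rwa [min_eq_left hDH] at this
    have hfull : ∀ (R' : Finset (H × D)) (h0 : H),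
        hProps M ι R' h0 = univ.filter fun d0 => M.accH h0 d0 ∧ (h0, d0) ∉ R' := by
      intro R' h0
      unfold hProps
      apply topN_eq_self
      exact le_trans (card_filter_le _ _) (by rw [card_univ]; exact hι' h0)
    have hRhd : (h, d) ∈ iRej M ι κ := by
      by_contra hc
      apply hnoProp
      rw [hfull]
      exact mem_filter.2 ⟨mem_univ _, haH, hc⟩
    obtain ⟨k, hkN, hnotk, hink⟩ :=
      iter_entry (iStep M ι κ) (Fintype.card D * Fintype.card H) hRhd
    have hdata : d ∈ hProps M ι ((iStep M ι κ)^[k] ∅) h ∧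
        h ∉ dKeeps M ι κ ((iStep M ι κ)^[k] ∅) d := by
      rcases mem_union.1 hink with h1 | h1
      · exact absurd h1 hnotk
      · exact (mem_filter.1 h1).2
    have hPk : κ d ≤ (dKeeps M ι κ ((iStep M ι κ)^[k] ∅) d).card ∧
        ∀ h' ∈ dKeeps M ι κ ((iStep M ι κ)^[k] ∅) d, M.rankDH d h' < M.rankDH d h := by
      have hht : h ∈ univ.filter fun h0 =>
          M.accD d h0 ∧ d ∈ hProps M ι ((iStep M ι κ)^[k] ∅) h0 :=
        mem_filter.2 ⟨mem_univ _, haD, hdata.1⟩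
      have hnk : ¬ (((univ.filter fun h0 =>
          M.accD d h0 ∧ d ∈ hProps M ι ((iStep M ι κ)^[k] ∅) h0).filter
          fun y => M.rankDH d y < M.rankDH d h).card < κ d) := by
        intro hc; exact hdata.2 (mem_topN_iff.2 ⟨hht, hc⟩)
      have hbet : κ d ≤ ((univ.filter fun h0 =>
          M.accD d h0 ∧ d ∈ hProps M ι ((iStep M ι κ)^[k] ∅) h0).filter
          fun y => M.rankDH d y < M.rankDH d h).card := by omega
      have htcard : κ d + 1 ≤ (univ.filter fun h0 =>
          M.accD d h0 ∧ d ∈ hProps M ι ((iStep M ι κ)^[k] ∅) h0).card := by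
        have hsub : ((univ.filter fun h0 =>
            M.accD d h0 ∧ d ∈ hProps M ι ((iStep M ι κ)^[k] ∅) h0).filter
            fun y => M.rankDH d y < M.rankDH d h) ⊆
            (univ.filter fun h0 =>
            M.accD d h0 ∧ d ∈ hProps M ι ((iStep M ι κ)^[k] ∅) h0).erase h := by
          intro y hy; rw [mem_filter] at hy
          exact mem_erase.2 ⟨fun e => by subst e; exact lt_irrefl _ hy.2, hy.1⟩
        have h1 := card_le_card hsub
        rw [card_erase_of_mem hht] at h1
        have h2 := card_pos.2 ⟨h, hht⟩
        omega
      constructor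
      · have h1 : (dKeeps M ι κ ((iStep M ι κ)^[k] ∅) d).card = min (κ d)
            (univ.filter fun h0 =>
            M.accD d h0 ∧ d ∈ hProps M ι ((iStep M ι κ)^[k] ∅) h0).card :=
          card_topN (hM.1 d) _ _
        rw [h1, min_eq_left (by omega)]
      · intro h' hh'
        exact topN_all_lt hht hbet hh'
    have hstep : ∀ R', (κ d ≤ (dKeeps M ι κ R' d).card ∧
        ∀ h' ∈ dKeeps M ι κ R' d, M.rankDH d h' < M.rankDH d h) →
        (κ d ≤ (dKeeps M ι κ (iStep M ι κ R') d).card ∧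
        ∀ h' ∈ dKeeps M ι κ (iStep M ι κ R') d, M.rankDH d h' < M.rankDH d h) := by
      rintro R' ⟨hPc, hPl⟩
      have hkeep : ∀ h' ∈ dKeeps M ι κ R' d,
          M.accD d h' ∧ d ∈ hProps M ι (iStep M ι κ R') h' := by
        intro h' hh'
        have hfil := mem_filter.1 (topN_subset hh')
        have hds_old := mem_filter.1 (topN_subset hfil.2.2)
        have hnotR' : (h', d) ∉ iStep M ι κ R' := by
          intro hmem
          rcases mem_union.1 hmem with h1 | h1
          · exact hds_old.2.2 h1
          · exact (mem_filter.1 h1).2.2 hh'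
        refine ⟨hfil.2.1, ?_⟩
        refine topN_anti ?_ ?_ hfil.2.2
        · intro x hx; rw [mem_filter] at hx ⊢
          exact ⟨hx.1, hx.2.1, fun hc => hx.2.2 (subset_union_left hc)⟩
        · exact mem_filter.2 ⟨mem_univ _, hds_old.2.1, hnotR'⟩
      have hsubt : dKeeps M ι κ R' d ⊆ univ.filter fun h0 =>
          M.accD d h0 ∧ d ∈ hProps M ι (iStep M ι κ R') h0 := by
        intro h' hh'
        obtain ⟨ha, hp⟩ := hkeep h' hh'
        exact mem_filter.2 ⟨mem_univ _, ha, hp⟩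
      have htc : κ d ≤ (univ.filter fun h0 =>
          M.accD d h0 ∧ d ∈ hProps M ι (iStep M ι κ R') h0).card :=
        le_trans hPc (card_le_card hsubt)
      constructor
      · have h1 : (dKeeps M ι κ (iStep M ι κ R') d).card = min (κ d)
            (univ.filter fun h0 =>
            M.accD d h0 ∧ d ∈ hProps M ι (iStep M ι κ R') h0).card :=
          card_topN (hM.1 d) _ _
        rw [h1, min_eq_left htc]
      · intro x hx
        by_contra hlt
        push_neg at hlt
        have hsubb : dKeeps M ι κ R' d ⊆ (univ.filter fun h0 =>
            M.accD d h0 ∧ d ∈ hProps M ι (iStep M ι κ R') h0).filter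
            fun y => M.rankDH d y < M.rankDH d x := by
          intro y hy
          exact mem_filter.2 ⟨hsubt hy, lt_of_lt_of_le (hPl y hy) hlt⟩
        have h1 := le_trans hPc (card_le_card hsubb)
        have hx' := mem_topN_iff.1 hx
        omega
    have hPN : κ d ≤ (dKeeps M ι κ (iRej M ι κ) d).card ∧
        ∀ h' ∈ dKeeps M ι κ (iRej M ι κ) d, M.rankDH d h' < M.rankDH d h :=
      iter_invar (iStep M ι κ)
        (fun R' => κ d ≤ (dKeeps M ι κ R' d).card ∧
          ∀ h' ∈ dKeeps M ι κ R' d, M.rankDH d h' < M.rankDH d h)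
        hstep (le_of_lt hkN) hPk
    have hKcard : Fintype.card D ≤ (dKeeps M ι κ (iRej M ι κ) d).card :=
      le_trans (hκ' d) hPN.1
    have hpart : ∀ h' ∈ dKeeps M ι κ (iRej M ι κ) d, ∃ d'',
        (d'', h') ∈ finalMatch M (interviews M ι κ) ∧ d'' ≠ d := by
      intro h' hh'
      have hlt : M.rankDH d h' < M.rankDH d h := hPN.2 h' hh'
      have hV' : (h', d) ∈ interviews M ι κ := (mem_interviews M).2 hh'
      rcases master_lemma M hM hV' with h1 | ⟨h'', h2, h3⟩ | ⟨d'', h2, h3⟩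
      · have h4 := hdp h' h1; omega
      · have h4 := hdp h'' h2; omega
      · exact ⟨d'', h2, fun e => by subst e; exact lt_irrefl _ h3⟩
    have hpart' : ∀ h' : H, ∃ d'', h' ∈ dKeeps M ι κ (iRej M ι κ) d →
        ((d'', h') ∈ finalMatch M (interviews M ι κ) ∧ d'' ≠ d) := by
      intro h'
      by_cases hh' : h' ∈ dKeeps M ι κ (iRej M ι κ) d
      · obtain ⟨d'', h1, h2⟩ := hpart h' hh'; exact ⟨d'', fun _ => ⟨h1, h2⟩⟩
      · exact ⟨d, fun c => absurd c hh'⟩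
    choose g hg using hpart'
    have hcle : (dKeeps M ι κ (iRej M ι κ) d).card ≤ (univ.erase d).card := by
      apply card_le_card_of_injOn g
      · intro h' hh'; exact mem_erase.2 ⟨(hg h' hh').2, mem_univ _⟩
      · intro h1 hh1 h2 hh2 heq
        exact finalMatch_right_unique M hM ((hg h1 (mem_coe.1 hh1)).1)
          (heq.symm ▸ (hg h2 (mem_coe.1 hh2)).1)
    have hec : (univ.erase d).card = Fintype.card D - 1 := by
      rw [card_erase_of_mem (mem_univ d), card_univ]
    omega
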